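/- arXiv:2502.18942 — 4 statements merged into one kernel-verified Lean document; each statement's English description precedes it below -/
import Mathlib

section
/- In any valid red-blue colouring of a graph G, every subgraph of G isomorphic to the complete bipartite graph K_{ℓ,r} with ℓ ≥ 3 and r ≥ 2 is monochromatic. -/
/-- A valid red-blue colouring: every vertex is red (`true`) or blue (`false`),
both colours are used, and every vertex has at most one neighbour of the opposite colour. -/
def validRB {V : Type*} (G : SimpleGraph V) (c : V → Bool) : Prop :=
  (∃ v, c v = true) ∧ (∃ v, c v = false) ∧
    ∀ v : V, {u | G.Adj v u ∧ c u ≠ c v}.Subsingleton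

/-- Every subgraph isomorphic to the complete bipartite graph `K_{ℓ,r}` with
`ℓ ≥ 3`, `r ≥ 2` is monochromatic in any valid red-blue colouring. -/
theorem stmt2 {V : Type*} [Fintype V] [DecidableEq V] (G : SimpleGraph V) (c : V → Bool)
    (hval : validRB G c) (ℓ r : ℕ) (hℓ : 3 ≤ ℓ) (hr : 2 ≤ r)
    (X Y : Finset V) (hdisj : Disjoint X Y) (hX : X.card = ℓ) (hY : Y.card = r)
    (hbip : ∀ x ∈ X, ∀ y ∈ Y, G.Adj x y) :
    ∀ u ∈ X ∪ Y, ∀ v ∈ X ∪ Y, c u = c v := by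
  obtain ⟨-, -, hsub⟩ := hval
  -- key: for distinct y0 y1 in Y, every x in X has c x = c y0
  have key : ∀ y0 ∈ Y, ∀ y1 ∈ Y, y0 ≠ y1 → ∀ x ∈ X, c x = c y0 := by
    intro y0 hy0 y1 hy1 hne x hx
    by_contra h
    by_cases hcy : c y1 = c y0
    · exact hne (hsub (v := x)
        ⟨hbip x hx y0 hy0, Ne.symm h⟩
        ⟨hbip x hx y1 hy1, by rw [hcy]; exact Ne.symm h⟩)
    · -- count X
      have hA : (X.filter (fun v => c v = c y0)).card ≤ 1 := by
        apply Finset.card_le_one.mpr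
        intro a ha b hb
        simp only [Finset.mem_filter] at ha hb
        exact hsub (v := y1)
          ⟨(hbip a ha.1 y1 hy1).symm, by rw [ha.2]; exact fun e => hcy e.symm⟩
          ⟨(hbip b hb.1 y1 hy1).symm, by rw [hb.2]; exact fun e => hcy e.symm⟩
      have hB : (X.filter (fun v => ¬ c v = c y0)).card ≤ 1 := by
        apply Finset.card_le_one.mpr
        intro a ha b hb
        simp only [Finset.mem_filter] at ha hb
        exact hsub (v := y0)
          ⟨(hbip a ha.1 y0 hy0).symm, ha.2⟩
          ⟨(hbip b hb.1 y0 hy0).symm, hb.2⟩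
      have := Finset.card_filter_add_card_filter_not
        (s := X) (p := fun v => c v = c y0)
      omega
  -- Y has two distinct elements
  obtain ⟨y0, hy0, y1, hy1, hne⟩ := Finset.one_lt_card.mp (by omega : 1 < Y.card)
  obtain ⟨x0, hx0⟩ := Finset.card_pos.mp (by omega : 0 < X.card)
  have hXcol : ∀ x ∈ X, c x = c y0 := key y0 hy0 y1 hy1 hne
  have hYcol : ∀ y ∈ Y, c y = c y0 := by
    intro y hy
    by_cases hyy : y = y0
    · rw [hyy]
    · rw [← key y hy y0 hy0 hyy x0 hx0]
      exact hXcol x0 hx0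
  intro u hu v hv
  have hall : ∀ w ∈ X ∪ Y, c w = c y0 := by
    intro w hw
    rcases Finset.mem_union.mp hw with h | h
    · exact hXcol w h
    · exact hYcol w h
  rw [hall u hu, hall v hv]
end

section
/- Every connected P₄-free graph on n ≥ 2 vertices has at most 2n distinct valid red-blue colourings. -/
/-- `G` has no induced path on 4 vertices. -/
def P4Free {V : Type*} (G : SimpleGraph V) : Prop :=
  ¬ ∃ a b c d : V, a ≠ b ∧ a ≠ c ∧ a ≠ d ∧ b ≠ c ∧ b ≠ d ∧ c ≠ d ∧
    G.Adj a b ∧ G.Adj b c ∧ G.Adj c d ∧ ¬ G.Adj a c ∧ ¬ G.Adj a d ∧ ¬ G.Adj b d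

section Aux

variable {V : Type*} {G : SimpleGraph V} {c : V → Bool}

lemma walk_aux {V : Type*} {G : SimpleGraph V} (hfree : P4Free G) :
    ∀ {x y : V}, G.Walk x y → x = y ∨ G.Adj x y ∨ ∃ w, G.Adj x w ∧ G.Adj w y := by
  intro x y p
  induction p with
  | nil => exact Or.inl rfl
  | @cons u v w h q ih =>
    rcases ih with rfl | hvw | ⟨t, hvt, htw⟩
    · exact Or.inr (Or.inl h)
    · exact Or.inr (Or.inr ⟨v, h, hvw⟩)
    · by_cases huw : u = w
      · exact Or.inl huw
      by_cases hAuw : G.Adj u w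
      · exact Or.inr (Or.inl hAuw)
      by_cases hut : u = t
      · exact absurd (hut ▸ htw) hAuw
      by_cases hAut : G.Adj u t
      · exact Or.inr (Or.inr ⟨t, hAut, htw⟩)
      by_cases hAvw : G.Adj v w
      · exact Or.inr (Or.inr ⟨v, h, hAvw⟩)
      by_cases hvw : v = w
      · exact Or.inr (Or.inl (hvw ▸ h))
      exact absurd ⟨u, v, t, w, h.ne, hut, huw, hvt.ne, hvw, htw.ne,
        h, hvt, htw, hAut, hAuw, hAvw⟩ hfree

lemma uniq (hsub : ∀ v : V, {u | G.Adj v u ∧ c u ≠ c v}.Subsingleton)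
    {v a b : V} (h1 : G.Adj v a) (h2 : c a ≠ c v) (h3 : G.Adj v b) (h4 : c b ≠ c v) :
    a = b :=
  hsub v ⟨h1, h2⟩ ⟨h3, h4⟩

lemma pairs (hconn : G.Connected) (hfree : P4Free G)
    (hsub : ∀ v : V, {u | G.Adj v u ∧ c u ≠ c v}.Subsingleton)
    {x₁ y₁ x₂ y₂ : V}
    (hx₁ : c x₁ = true) (hy₁ : c y₁ = false) (hx₂ : c x₂ = true) (hy₂ : c y₂ = false)
    (e₁ : G.Adj x₁ y₁) (e₂ : G.Adj x₂ y₂) (hx : x₁ ≠ x₂) (hy : y₁ ≠ y₂) :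
    G.Adj x₁ x₂ ∧ G.Adj y₁ y₂ := by
  have cxy₁ : c y₁ ≠ c x₁ := by rw [hx₁, hy₁]; simp
  have cxy₂ : c y₂ ≠ c x₂ := by rw [hx₂, hy₂]; simp
  have nA12 : ¬ G.Adj x₁ y₂ := by
    intro h
    have : x₂ = x₁ := uniq hsub e₂.symm cxy₂.symm h.symm (by rw [hx₁, hy₂]; simp)
    exact hx this.symm
  have nA21 : ¬ G.Adj x₂ y₁ := by
    intro h
    have : x₁ = x₂ := uniq hsub e₁.symm cxy₁.symm h.symm (by rw [hx₂, hy₁]; simp)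
    exact hx this
  have h12 : G.Adj x₁ x₂ := by
    by_contra h12
    have hne : x₁ ≠ x₂ := hx
    rcases walk_aux hfree ((hconn x₁ x₂).some) with h | h | ⟨w, hw1, hw2⟩
    · exact hne h
    · exact h12 h
    · cases hcw : c w with
      | false =>
        have hwy : w = y₁ := uniq hsub hw1 (by rw [hcw, hx₁]; simp) e₁ cxy₁
        exact nA21 (hwy ▸ hw2).symm
      | true =>
        have nAy₁w : ¬ G.Adj y₁ w := by
          intro h
          exact (G.ne_of_adj hw1) (uniq hsub e₁.symm cxy₁.symm h (by rw [hcw, hy₁]; simp))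
        exact hfree ⟨y₁, x₁, w, x₂, e₁.ne', (fun h => by rw [h, hcw] at hy₁; simp at hy₁),
          (fun h => by rw [h, hx₂] at hy₁; simp at hy₁), (G.ne_of_adj hw1), hne,
          (G.ne_of_adj hw2),
          e₁.symm, hw1, hw2, nAy₁w, (fun h => nA21 h.symm), h12⟩
  refine ⟨h12, ?_⟩
  by_contra g12
  exact hfree ⟨y₁, x₁, x₂, y₂, e₁.ne', (fun h => by rw [h, hx₂] at hy₁; simp at hy₁),
    hy, hx, (fun h => by rw [h, hy₂] at hx₁; simp at hx₁), e₂.ne,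
    e₁.symm, h12, e₂, (fun h => nA21 h.symm), g12, nA12⟩

lemma structureLemma (hconn : G.Connected) (hfree : P4Free G) (hc : validRB G c)
    (hR : ¬ ∃ v, ∀ u, c u = true ↔ u = v) (hB : ¬ ∃ v, ∀ u, c u = false ↔ u = v) :
    ∃ r₁ r₂ b₁ b₂ : V, c r₁ = true ∧ c r₂ = true ∧ c b₁ = false ∧ c b₂ = false ∧
      (∀ v, v = r₁ ∨ v = r₂ ∨ v = b₁ ∨ v = b₂) ∧
      G.Adj r₁ r₂ ∧ G.Adj b₁ b₂ ∧ G.Adj r₁ b₁ ∧ G.Adj r₂ b₂ ∧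
      ¬ G.Adj r₁ b₂ ∧ ¬ G.Adj r₂ b₁ := by
  obtain ⟨⟨vR, hvR⟩, ⟨vB, hvB⟩, hsub⟩ := hc
  -- two distinct reds
  have hred2 : ∃ u, c u = true ∧ u ≠ vR := by
    by_contra h
    push_neg at h
    exact hR ⟨vR, fun u => ⟨fun hu => h u hu, fun hu => hu ▸ hvR⟩⟩
  obtain ⟨vR', hvR', hRne⟩ := hred2
  have hblue2 : ∃ u, c u = false ∧ u ≠ vB := by
    by_contra h
    push_neg at h
    exact hB ⟨vB, fun u => ⟨fun hu => h u hu, fun hu => hu ▸ hvB⟩⟩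
  obtain ⟨vB', hvB', hBne⟩ := hblue2
  -- a cut edge (r, b)
  have hcut : ∃ r b, c r = true ∧ c b = false ∧ G.Adj r b := by
    rcases walk_aux hfree ((hconn vR vB).some) with h | h | ⟨w, hw1, hw2⟩
    · rw [h, hvB] at hvR; simp at hvR
    · exact ⟨vR, vB, hvR, hvB, h⟩
    · cases hcw : c w with
      | true => exact ⟨w, vB, hcw, hvB, hw2⟩
      | false => exact ⟨vR, w, hvR, hcw, hw1⟩
  obtain ⟨r, b, hr, hb, hrb⟩ := hcut
  have cbr : c b ≠ c r := by rw [hr, hb]; simp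
  -- r has a red neighbour
  have hredNbr : ∃ r', c r' = true ∧ G.Adj r r' := by
    obtain ⟨r₂, hr₂, hr₂ne⟩ : ∃ r₂, c r₂ = true ∧ r₂ ≠ r := by
      by_cases h : r = vR
      · exact ⟨vR', hvR', h ▸ hRne⟩
      · exact ⟨vR, hvR, fun hh => h hh.symm⟩
    rcases walk_aux hfree ((hconn r r₂).some) with h | h | ⟨w, hw1, hw2⟩
    · exact absurd h.symm hr₂ne
    · exact ⟨r₂, hr₂, h⟩
    · cases hcw : c w with
      | true => exact ⟨w, hcw, hw1⟩
      | false =>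
        have hwb : w = b := uniq hsub hw1 (by rw [hcw, hr]; simp) hrb cbr
        have : r = r₂ := uniq hsub hrb.symm cbr.symm (hwb ▸ hw2)
          (by rw [hr₂, hb]; simp)
        exact absurd this hr₂ne.symm
  obtain ⟨r', hr', hrr'⟩ := hredNbr
  -- b has a blue neighbour
  have hblueNbr : ∃ b', c b' = false ∧ G.Adj b b' := by
    obtain ⟨b₂, hb₂, hb₂ne⟩ : ∃ b₂, c b₂ = false ∧ b₂ ≠ b := by
      by_cases h : b = vB
      · exact ⟨vB', hvB', h ▸ hBne⟩
      · exact ⟨vB, hvB, fun hh => h hh.symm⟩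
    rcases walk_aux hfree ((hconn b b₂).some) with h | h | ⟨w, hw1, hw2⟩
    · exact absurd h.symm hb₂ne
    · exact ⟨b₂, hb₂, h⟩
    · cases hcw : c w with
      | false => exact ⟨w, hcw, hw1⟩
      | true =>
        have hwr : w = r := uniq hsub hw1 (by rw [hcw, hb]; simp) hrb.symm cbr.symm
        have : b = b₂ := uniq hsub hrb cbr (hwr ▸ hw2) (by rw [hb₂, hr]; simp)
        exact absurd this hb₂ne.symm
  obtain ⟨b', hb', hbb'⟩ := hblueNbr
  -- non-adjacencies from the matching property
  have nArb' : ¬ G.Adj r b' := by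
    intro h
    exact (G.ne_of_adj hbb') (uniq hsub hrb cbr h (by rw [hb', hr]; simp))
  have nAr'b : ¬ G.Adj r' b := by
    intro h
    exact (G.ne_of_adj hrr') (uniq hsub hrb.symm cbr.symm h.symm (by rw [hr', hb]; simp))
  -- colour-based distinctness
  have dr'b : r' ≠ b := fun h => by rw [h, hb] at hr'; simp at hr'
  have dr'b' : r' ≠ b' := fun h => by rw [h, hb'] at hr'; simp at hr'
  have drb : r ≠ b := fun h => by rw [h, hb] at hr; simp at hr
  have drb' : r ≠ b' := fun h => by rw [h, hb'] at hr; simp at hr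
  have hAr'b' : G.Adj r' b' := by
    by_contra hA
    exact hfree ⟨r', r, b, b', (G.ne_of_adj hrr').symm, dr'b, dr'b', drb, drb',
      (G.ne_of_adj hbb'), hrr'.symm, hrb, hbb', nAr'b, hA, nArb'⟩
  -- coverage: every vertex is one of r, r', b, b'
  have hcover : ∀ v, v = r ∨ v = r' ∨ v = b ∨ v = b' := by
    intro v
    by_contra hv
    push_neg at hv
    obtain ⟨hvr, hvr', hvb, hvb'⟩ := hv
    cases hcv : c v with
    | true =>
      have nAvb : ¬ G.Adj v b := by
        intro h
        exact hvr (uniq hsub hrb.symm cbr.symm h.symm (by rw [hcv, hb]; simp)).symm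
      have nAvb' : ¬ G.Adj v b' := by
        intro h
        exact hvr' (uniq hsub hAr'b'.symm (by rw [hr', hb']; simp) h.symm
          (by rw [hcv, hb']; simp)).symm
      have hAvr : G.Adj v r := by
        rcases walk_aux hfree ((hconn v b).some) with h | h | ⟨u, hu1, hu2⟩
        · exact absurd h hvb
        · exact absurd h nAvb
        · cases hcu : c u with
          | true =>
            have : u = r := uniq hsub hu2.symm (by rw [hcu, hb]; simp) hrb.symm cbr.symm
            exact this ▸ hu1
          | false =>
            exact (pairs hconn hfree hsub hcv hcu hr hb hu1 hrb hvr (G.ne_of_adj hu2)).1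
      have hAvr' : G.Adj v r' := by
        rcases walk_aux hfree ((hconn v b').some) with h | h | ⟨u, hu1, hu2⟩
        · exact absurd h hvb'
        · exact absurd h nAvb'
        · cases hcu : c u with
          | true =>
            have : u = r' := uniq hsub hu2.symm (by rw [hcu, hb']; simp) hAr'b'.symm
              (by rw [hr', hb']; simp)
            exact this ▸ hu1
          | false =>
            exact (pairs hconn hfree hsub hcv hcu hr' hb' hu1 hAr'b' hvr'
              (G.ne_of_adj hu2)).1
      exact hfree ⟨v, r, b, b', hvr, hvb, hvb', drb, drb', (G.ne_of_adj hbb'),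
        hAvr, hrb, hbb', nAvb, nAvb', nArb'⟩
    | false =>
      have nAvr : ¬ G.Adj v r := by
        intro h
        exact hvb (uniq hsub hrb cbr h.symm (by rw [hcv, hr]; simp)).symm
      have nAvr' : ¬ G.Adj v r' := by
        intro h
        exact hvb' (uniq hsub hAr'b' (by rw [hr', hb']; simp) h.symm
          (by rw [hcv, hr']; simp)).symm
      have hAvb : G.Adj v b := by
        rcases walk_aux hfree ((hconn v r).some) with h | h | ⟨u, hu1, hu2⟩
        · exact absurd h hvr
        · exact absurd h nAvr
        · cases hcu : c u with
          | false =>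
            have : u = b := uniq hsub hu2.symm (by rw [hcu, hr]; simp) hrb cbr
            exact this ▸ hu1
          | true =>
            exact (pairs hconn hfree hsub hcu hcv hr hb hu1.symm hrb
              (G.ne_of_adj hu2) hvb).2
      have hAvb' : G.Adj v b' := by
        rcases walk_aux hfree ((hconn v r').some) with h | h | ⟨u, hu1, hu2⟩
        · exact absurd h hvr'
        · exact absurd h nAvr'
        · cases hcu : c u with
          | false =>
            have : u = b' := uniq hsub hu2.symm (by rw [hcu, hr']; simp) hAr'b'
              (by rw [hr', hb']; simp)
            exact this ▸ hu1
          | true =>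
            exact (pairs hconn hfree hsub hcu hcv hr' hb' hu1.symm hAr'b'
              (G.ne_of_adj hu2) hvb').2
      exact hfree ⟨v, b, r, r', hvb, hvr, hvr', drb.symm, dr'b.symm,
        (G.ne_of_adj hrr'), hAvb, hrb.symm, hrr', nAvr, nAvr',
        fun h => nAr'b h.symm⟩
  exact ⟨r, r', b, b', hr, hr', hb, hb', hcover, hrr', hbb', hrb, hAr'b',
    nArb', nAr'b⟩

end Aux

/-- Every connected `P₄`-free graph on `n ≥ 2` vertices has at most `2n`
distinct valid red-blue colourings. -/
theorem stmt5 {V : Type*} [Fintype V] (G : SimpleGraph V)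
    (hconn : G.Connected) (hfree : P4Free G) (hcard : 2 ≤ Fintype.card V) :
    {c : V → Bool | validRB G c}.ncard ≤ 2 * Fintype.card V := by
  classical
  set A : Set (V → Bool) := {c | validRB G c} with hAdef
  by_cases hcase : ∀ c ∈ A, (∃ v, ∀ u, c u = true ↔ u = v) ∨
      (∃ v, ∀ u, c u = false ↔ u = v)
  · -- every valid colouring has a singleton colour class
    have hsubA : A ⊆ (Set.range (fun v : V => fun u : V => if u = v then true else false)) ∪
        (Set.range (fun v : V => fun u : V => if u = v then false else true)) := by
      intro c hc
      rcases hcase c hc with ⟨v, hv⟩ | ⟨v, hv⟩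
      · refine Or.inl ⟨v, ?_⟩
        funext u
        show (if u = v then true else false) = c u
        by_cases h : u = v
        · rw [if_pos h]
          exact ((hv u).mpr h).symm
        · rw [if_neg h]
          cases hcu : c u with
          | true => exact absurd ((hv u).mp hcu) h
          | false => rfl
      · refine Or.inr ⟨v, ?_⟩
        funext u
        show (if u = v then false else true) = c u
        by_cases h : u = v
        · rw [if_pos h]
          exact ((hv u).mpr h).symm
        · rw [if_neg h]
          cases hcu : c u with
          | false => exact absurd ((hv u).mp hcu) h
          | true => rfl
    have hrange : ∀ f : V → (V → Bool), (Set.range f).ncard ≤ Fintype.card V := by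
      intro f
      rw [← Set.image_univ]
      calc (f '' Set.univ).ncard ≤ (Set.univ : Set V).ncard :=
            Set.ncard_image_le Set.finite_univ
        _ = Fintype.card V := by rw [Set.ncard_univ, Nat.card_eq_fintype_card]
    calc A.ncard ≤ _ :=
          Set.ncard_le_ncard hsubA ((Set.finite_range _).union (Set.finite_range _))
      _ ≤ _ + _ := Set.ncard_union_le _ _
      _ ≤ Fintype.card V + Fintype.card V := add_le_add (hrange _) (hrange _)
      _ = 2 * Fintype.card V := (two_mul _).symm
  · -- some valid colouring has both classes of size ≥ 2 : C₄ case
    obtain ⟨c₀, hcc⟩ := not_forall.mp hcase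
    obtain ⟨hc₀, hPQ⟩ := _root_.not_imp.mp hcc
    obtain ⟨hnR, hnB⟩ := not_or.mp hPQ
    obtain ⟨r₁, r₂, b₁, b₂, h1, h2, h3, h4, hcov, hA12, hB12, hAB1, hAB2, hnAB12, hnAB21⟩ :=
      structureLemma hconn hfree hc₀ hnR hnB
    have dr₂b₁ : r₂ ≠ b₁ := fun h => by rw [h, h3] at h2; simp at h2
    have dr₁b₂ : r₁ ≠ b₂ := fun h => by rw [h, h4] at h1; simp at h1
    -- no valid colouring has a singleton class (all degrees are 2)
    have twonbrs : ∀ v : V, ∃ n₁ n₂, n₁ ≠ n₂ ∧ G.Adj v n₁ ∧ G.Adj v n₂ := by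
      intro v
      rcases hcov v with rfl | rfl | rfl | rfl
      · exact ⟨r₂, b₁, dr₂b₁, hA12, hAB1⟩
      · exact ⟨r₁, b₂, dr₁b₂, hA12.symm, hAB2⟩
      · exact ⟨b₂, r₁, fun h => dr₁b₂ h.symm, hB12, hAB1.symm⟩
      · exact ⟨b₁, r₂, fun h => dr₂b₁ h.symm, hB12.symm, hAB2.symm⟩
    have key : ∀ c' ∈ A, c' b₁ ≠ c' r₂ ∧ c' b₂ ≠ c' r₁ := by
      intro c' hc'
      obtain ⟨_, _, hsub'⟩ := hc'
      have hnR' : ¬ ∃ v, ∀ u, c' u = true ↔ u = v := by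
        rintro ⟨v, hv⟩
        obtain ⟨n₁, n₂, hn12, ha1, ha2⟩ := twonbrs v
        have hcv : c' v = true := (hv v).mpr rfl
        have e1 : c' n₁ = false := by
          cases h : c' n₁ with
          | false => rfl
          | true => exact absurd ((hv n₁).mp h) (G.ne_of_adj ha1).symm
        have e2 : c' n₂ = false := by
          cases h : c' n₂ with
          | false => rfl
          | true => exact absurd ((hv n₂).mp h) (G.ne_of_adj ha2).symm
        exact hn12 (uniq hsub' ha1 (by rw [e1, hcv]; simp) ha2 (by rw [e2, hcv]; simp))
      have hnB' : ¬ ∃ v, ∀ u, c' u = false ↔ u = v := by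
        rintro ⟨v, hv⟩
        obtain ⟨n₁, n₂, hn12, ha1, ha2⟩ := twonbrs v
        have hcv : c' v = false := (hv v).mpr rfl
        have e1 : c' n₁ = true := by
          cases h : c' n₁ with
          | true => rfl
          | false => exact absurd ((hv n₁).mp h) (G.ne_of_adj ha1).symm
        have e2 : c' n₂ = true := by
          cases h : c' n₂ with
          | true => rfl
          | false => exact absurd ((hv n₂).mp h) (G.ne_of_adj ha2).symm
        exact hn12 (uniq hsub' ha1 (by rw [e1, hcv]; simp) ha2 (by rw [e2, hcv]; simp))
      obtain ⟨R₁, R₂, B₁, B₂, g1, g2, g3, g4, gcov, gA12, gB12, gAB1, gAB2, gn12, gn21⟩ :=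
        structureLemma hconn hfree (⟨‹∃ v, c' v = true›, ‹∃ v, c' v = false›, hsub'⟩ :
          validRB G c') hnR' hnB'
      have memR : ∀ x : V, c' x = true → x = R₁ ∨ x = R₂ := by
        intro x hx
        rcases gcov x with e | e | e | e
        · exact Or.inl e
        · exact Or.inr e
        · rw [e, g3] at hx; simp at hx
        · rw [e, g4] at hx; simp at hx
      have memB : ∀ x : V, c' x = false → x = B₁ ∨ x = B₂ := by
        intro x hx
        rcases gcov x with e | e | e | e
        · rw [e, g1] at hx; simp at hx
        · rw [e, g2] at hx; simp at hx
        · exact Or.inl e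
        · exact Or.inr e
      have main : ∀ x y : V, x ≠ y → ¬ G.Adj x y → c' x ≠ c' y := by
        intro x y hxy hnadj heq
        cases hx : c' x with
        | true =>
          have hy : c' y = true := by rw [← heq, hx]
          rcases memR x hx with e | e <;> rcases memR y hy with e' | e'
          · exact hxy (e.trans e'.symm)
          · rw [e, e'] at hnadj; exact hnadj gA12
          · rw [e, e'] at hnadj; exact hnadj gA12.symm
          · exact hxy (e.trans e'.symm)
        | false =>
          have hy : c' y = false := by rw [← heq, hx]
          rcases memB x hx with e | e <;> rcases memB y hy with e' | e'
          · exact hxy (e.trans e'.symm)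
          · rw [e, e'] at hnadj; exact hnadj gB12
          · rw [e, e'] at hnadj; exact hnadj gB12.symm
          · exact hxy (e.trans e'.symm)
      exact ⟨main b₁ r₂ (fun h => dr₂b₁ h.symm) (fun h => hnAB21 h.symm),
        main b₂ r₁ (fun h => dr₁b₂ h.symm) (fun h => hnAB12 h.symm)⟩
    have boolne : ∀ x y : Bool, x ≠ y → x = !y := by decide
    have hinj : Set.InjOn (fun c' : V → Bool => (c' r₁, c' r₂)) A := by
      intro c' hc' c'' hc'' h
      simp only [Prod.mk.injEq] at h
      obtain ⟨p1, p2⟩ := h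
      have e1 := boolne _ _ (key c' hc').1
      have e2 := boolne _ _ (key c' hc').2
      have f1 := boolne _ _ (key c'' hc'').1
      have f2 := boolne _ _ (key c'' hc'').2
      funext v
      rcases hcov v with e | e | e | e <;> rw [e]
      · exact p1
      · exact p2
      · rw [e1, f1, p2]
      · rw [e2, f2, p1]
    calc A.ncard ≤ (Set.univ : Set (Bool × Bool)).ncard :=
          Set.ncard_le_ncard_of_injOn _ (fun a _ => Set.mem_univ _) hinj Set.finite_univ
      _ = 4 := by rw [Set.ncard_univ, Nat.card_eq_fintype_card]; rfl
      _ ≤ 2 * Fintype.card V := by omega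
end

section
/- Every connected P₄-free graph on at least 2 vertices contains a spanning complete bipartite subgraph K_{k,l} for some integers 1 ≤ k ≤ l; that is, its vertex set can be partitioned into nonempty sets X and Y such that every vertex of X is adjacent to every vertex of Y. -/
/-- `G` splits: a nonempty proper part with no edges to its complement. -/
def Split {V : Type*} (G : SimpleGraph V) : Prop :=
  ∃ X : Set V, X.Nonempty ∧ Xᶜ.Nonempty ∧ ∀ x ∈ X, ∀ y ∈ Xᶜ, ¬ G.Adj x y

lemma p4free_compl {V : Type*} {G : SimpleGraph V} (h : P4Free G) : P4Free Gᶜ := by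
  rintro ⟨a, b, c, d, h1, h2, h3, h4, h5, h6, ab, bc, cd, nac, nad, nbd⟩
  have adjbd : G.Adj b d := by
    by_contra hadj
    exact nbd ⟨h5, hadj⟩
  have adjad : G.Adj a d := by
    by_contra hadj
    exact nad ⟨h3, hadj⟩
  have adjac : G.Adj a c := by
    by_contra hadj
    exact nac ⟨h2, hadj⟩
  exact h ⟨b, d, a, c, h5, h1.symm, h4, h3.symm, h6.symm, h2,
    adjbd, adjad.symm, adjac,
    fun h' => ab.2 h'.symm, fun h' => bc.2 h', fun h' => cd.2 h'.symm⟩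

lemma split_compl_of_join {V : Type*} (G : SimpleGraph V) (hfree : P4Free G)
    (v : V) (A B : Set V) (hA : A.Nonempty) (hB : B.Nonempty)
    (hdisj : ∀ x, x ∈ A → x ∈ B → False)
    (hunion : ∀ x, x ≠ v → x ∈ A ∨ x ∈ B)
    (hAv : ∀ a ∈ A, a ≠ v) (hBv : ∀ b ∈ B, b ≠ v)
    (hcross : ∀ a ∈ A, ∀ b ∈ B, G.Adj a b) : Split G ∨ Split Gᶜ := by
  classical
  by_cases hvA : ∀ a ∈ A, G.Adj v a
  · right
    refine ⟨A, hA, ⟨v, fun hv => hAv v hv rfl⟩, ?_⟩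
    intro a ha y hy hadj
    apply hadj.2
    by_cases hyv : y = v
    · exact hyv ▸ (hvA a ha).symm
    · rcases hunion y hyv with hyA | hyB
      · exact absurd hyA hy
      · exact hcross a ha y hyB
  by_cases hvB : ∀ b ∈ B, G.Adj v b
  · right
    refine ⟨B, hB, ⟨v, fun hv => hBv v hv rfl⟩, ?_⟩
    intro b hb y hy hadj
    apply hadj.2
    by_cases hyv : y = v
    · exact hyv ▸ (hvB b hb).symm
    · rcases hunion y hyv with hyA | hyB
      · exact (hcross y hyA b hb).symm
      · exact absurd hyB hy
  push_neg at hvA hvB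
  obtain ⟨a₀, ha₀, hva₀⟩ := hvA
  obtain ⟨b₀, hb₀, hvb₀⟩ := hvB
  by_cases hiso : ∀ w, ¬ G.Adj v w
  · left
    refine ⟨{v}, ⟨v, rfl⟩, ⟨a₀, by simpa using hAv a₀ ha₀⟩, ?_⟩
    intro x hx y _ hadj
    rcases hx with rfl
    exact hiso y hadj
  push_neg at hiso
  obtain ⟨c, hc⟩ := hiso
  right
  refine ⟨{w | ¬ G.Adj v w}, ⟨v, G.irrefl⟩, ⟨c, by simpa using hc⟩, ?_⟩
  intro x hx y hy hadj
  apply hadj.2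
  have hvy : G.Adj v y := by simpa using hy
  have hx' : ¬ G.Adj v x := hx
  have hyne : y ≠ v := fun h => by simp [h] at hvy
  by_cases hxv : x = v
  · exact hxv ▸ hvy
  have hyAB := hunion y hyne
  have hxAB := hunion x hxv
  have hxy : x ≠ y := fun h => hx' (h ▸ hvy)
  rcases hxAB with hxA | hxB
  · rcases hyAB with hyA | hyB
    · -- x ∈ A, y ∈ A : use b₀
      by_contra hnadj
      exact hfree ⟨v, y, b₀, x, (G.ne_of_adj hvy), fun h => hBv b₀ hb₀ h.symm,
        fun h => hxv h.symm, fun h => hdisj y hyA (h ▸ hb₀),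
        fun h => hxy h.symm, fun h => hdisj x hxA (h ▸ hb₀),
        hvy, hcross y hyA b₀ hb₀, (hcross x hxA b₀ hb₀).symm,
        hvb₀, hx', fun h => hnadj h.symm⟩
    · exact hcross x hxA y hyB
  · rcases hyAB with hyA | hyB
    · exact (hcross y hyA x hxB).symm
    · -- x ∈ B, y ∈ B : use a₀
      by_contra hnadj
      exact hfree ⟨v, y, a₀, x, (G.ne_of_adj hvy), fun h => hAv a₀ ha₀ h.symm,
        fun h => hxv h.symm, fun h => hdisj a₀ ha₀ (h ▸ hyB),
        fun h => hxy h.symm, fun h => hdisj a₀ ha₀ (h ▸ hxB),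
        hvy, (hcross a₀ ha₀ y hyB).symm, hcross a₀ ha₀ x hxB,
        hva₀, hx', fun h => hnadj h.symm⟩

lemma key : ∀ (n : ℕ) (V : Type u) [Fintype V] (G : SimpleGraph V),
    P4Free G → Fintype.card V ≤ n → 2 ≤ Fintype.card V → Split G ∨ Split Gᶜ := by
  intro n
  induction n with
  | zero => intro V _ G _ h1 h2; omega
  | succ n ih =>
    intro V _ G hfree hle hge
    classical
    by_cases hc2 : Fintype.card V = 2
    · -- base case: two vertices
      rw [← Nat.card_eq_fintype_card, Nat.card_eq_two_iff] at hc2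
      obtain ⟨x, y, hxy, huniv⟩ := hc2
      have hall : ∀ z : V, z = x ∨ z = y := by
        intro z
        have : z ∈ ({x, y} : Set V) := huniv ▸ Set.mem_univ z
        simpa using this
      by_cases hadj : G.Adj x y
      · right
        refine ⟨{x}, ⟨x, rfl⟩, ⟨y, by simpa using hxy.symm⟩, ?_⟩
        intro a ha b hb hab
        rcases ha with rfl
        rcases hall b with rfl | rfl
        · exact (hb rfl).elim
        · exact hab.2 hadj
      · left
        refine ⟨{x}, ⟨x, rfl⟩, ⟨y, by simpa using hxy.symm⟩, ?_⟩
        intro a ha b hb hab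
        rcases ha with rfl
        rcases hall b with rfl | rfl
        · exact hb rfl
        · exact hadj hab
    · -- inductive step: delete a vertex
      have hge3 : 3 ≤ Fintype.card V := by omega
      have : Nonempty V := Fintype.card_pos_iff.mp (by omega)
      obtain ⟨v⟩ := this
      let G' : SimpleGraph {w : V // w ≠ v} := G.comap Subtype.val
      have hfree' : P4Free G' := by
        rintro ⟨a, b, c, d, h1, h2, h3, h4, h5, h6, ab, bc, cd, nac, nad, nbd⟩
        exact hfree ⟨a, b, c, d,
          fun h => h1 (Subtype.ext h), fun h => h2 (Subtype.ext h),
          fun h => h3 (Subtype.ext h), fun h => h4 (Subtype.ext h),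
          fun h => h5 (Subtype.ext h), fun h => h6 (Subtype.ext h),
          ab, bc, cd, nac, nad, nbd⟩
      have hcard' : Fintype.card {w : V // w ≠ v} = Fintype.card V - 1 := by
        have := Fintype.card_subtype_compl (fun w : V => w = v)
        simpa [Fintype.card_subtype_eq] using this
      have hres := ih {w : V // w ≠ v} G' hfree' (by omega) (by omega)
      -- lift a split of G' or of G'ᶜ to V
      rcases hres with ⟨X, hX, hXc, hno⟩ | ⟨X, hX, hXc, hno⟩
      · -- Split G' : no edges across, so all Gᶜ edges across; join for Gᶜ
        obtain ⟨x₀, hx₀⟩ := hX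
        obtain ⟨y₀, hy₀⟩ := hXc
        have := split_compl_of_join Gᶜ (p4free_compl hfree) v
          (Subtype.val '' X) (Subtype.val '' Xᶜ)
          ⟨x₀, x₀, hx₀, rfl⟩ ⟨y₀, y₀, hy₀, rfl⟩
          (by rintro z ⟨a, ha, rfl⟩ ⟨b, hb, hba⟩
              have : a = b := Subtype.ext hba.symm
              exact hb (this ▸ ha))
          (by intro z hz
              by_cases hzX : (⟨z, hz⟩ : {w : V // w ≠ v}) ∈ X
              · exact Or.inl ⟨⟨z, hz⟩, hzX, rfl⟩
              · exact Or.inr ⟨⟨z, hz⟩, hzX, rfl⟩)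
          (by rintro z ⟨a, _, rfl⟩; exact a.2)
          (by rintro z ⟨a, _, rfl⟩; exact a.2)
          (by rintro z ⟨a, ha, rfl⟩ w ⟨b, hb, rfl⟩
              have hne : (a : V) ≠ (b : V) := fun h => hb (Subtype.ext h ▸ ha)
              exact ⟨hne, hno a ha b hb⟩)
        rcases this with h | h
        · exact Or.inr h
        · rw [compl_compl] at h; exact Or.inl h
      · -- Split G'ᶜ : all G-edges across; join for G
        obtain ⟨x₀, hx₀⟩ := hX
        obtain ⟨y₀, hy₀⟩ := hXc
        exact split_compl_of_join G hfree v
          (Subtype.val '' X) (Subtype.val '' Xᶜ)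
          ⟨x₀, x₀, hx₀, rfl⟩ ⟨y₀, y₀, hy₀, rfl⟩
          (by rintro z ⟨a, ha, rfl⟩ ⟨b, hb, hba⟩
              have : a = b := Subtype.ext hba.symm
              exact hb (this ▸ ha))
          (by intro z hz
              by_cases hzX : (⟨z, hz⟩ : {w : V // w ≠ v}) ∈ X
              · exact Or.inl ⟨⟨z, hz⟩, hzX, rfl⟩
              · exact Or.inr ⟨⟨z, hz⟩, hzX, rfl⟩)
          (by rintro z ⟨a, _, rfl⟩; exact a.2)
          (by rintro z ⟨a, _, rfl⟩; exact a.2)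
          (by rintro z ⟨a, ha, rfl⟩ w ⟨b, hb, rfl⟩
              have hne : a ≠ b := fun h => hb (h ▸ ha)
              by_contra hnadj
              exact hno a ha b hb ⟨hne, hnadj⟩)

/-- Every connected `P₄`-free graph on at least 2 vertices has a spanning complete
bipartite subgraph: the vertex set partitions into nonempty `X` and `Y = Xᶜ`
with all edges between the parts present. (Then `k = min(|X|,|Y|) ≥ 1`.) -/
theorem stmt6 {V : Type*} [Fintype V] (G : SimpleGraph V)
    (hconn : G.Connected) (hfree : P4Free G) (hcard : 2 ≤ Fintype.card V) :
    ∃ X : Set V, X.Nonempty ∧ Xᶜ.Nonempty ∧ ∀ x ∈ X, ∀ y ∈ Xᶜ, G.Adj x y := by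
  classical
  rcases key (Fintype.card V) V G hfree le_rfl hcard with hsp | hsp
  · -- contradicts connectivity
    exfalso
    obtain ⟨X, ⟨x, hx⟩, ⟨y, hy⟩, hno⟩ := hsp
    have walkmem : ∀ (u u' : V) (p : G.Walk u u'), u ∈ X → u' ∈ X := by
      intro u u' p
      induction p with
      | nil => exact id
      | @cons a b c h p ih =>
        intro ha
        by_cases hb : b ∈ X
        · exact ih hb
        · exact absurd h (hno a ha b hb)
    obtain ⟨p⟩ := hconn x y
    exact hy (walkmem x y p hx)
  · obtain ⟨X, hX, hXc, hno⟩ := hsp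
    refine ⟨X, hX, hXc, ?_⟩
    intro x hx y hy
    have hne : x ≠ y := fun h => hy (h ▸ hx)
    by_contra hnadj
    exact hno x hx y hy ⟨hne, hnadj⟩
end

section
/- Let G be a P₇-free connected graph with a partial valid red-blue colouring in which the red set R is connected, the blue set B is connected, and R dominates the set Z of uncoloured vertices. If some uncoloured vertex x in a component C of G[Z] has no blue neighbour, and y ∈ C is a vertex of C adjacent to some b ∈ B chosen at minimum distance from x within C, then the distance in C between x and y is at most 5 (i.e., a shortest x–y path in C has at most 6 vertices). -/
/-- `G` has no induced path on 7 vertices. -/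
def P7Free {V : Type*} (G : SimpleGraph V) : Prop :=
  ¬ ∃ p : Fin 7 → V, Function.Injective p ∧
    ∀ i j : Fin 7, G.Adj (p i) (p j) ↔ (i.val + 1 = j.val ∨ j.val + 1 = i.val)

private lemma walk_split {V' : Type*} {G' : SimpleGraph V'} {u v : V'} (w : G'.Walk u v) :
    ∀ i, i ≤ w.length → ∃ (p : G'.Walk u (w.getVert i)) (q : G'.Walk (w.getVert i) v),
      p.length = i ∧ q.length = w.length - i := by
  induction w with
  | nil =>
    intro i hi
    simp only [SimpleGraph.Walk.length_nil, Nat.le_zero] at hi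
    subst hi
    exact ⟨.nil, .nil, rfl, rfl⟩
  | cons h w' ih =>
    intro i hi
    cases i with
    | zero => exact ⟨.nil, .cons h w', rfl, rfl⟩
    | succ j =>
      obtain ⟨p, q, hp, hq⟩ := ih j (by simpa using hi)
      exact ⟨.cons h p, q, by simp [hp], by simpa using hq⟩

/-- In a `P₇`-free connected graph with a valid partial red-blue colouring with `R`
and `B` connected and `R` dominating the uncoloured set `Z`: if `x` is an uncoloured
vertex with no blue neighbour and `y` is a vertex in the same component of `G[Z]`
adjacent to `B` at minimum distance from `x` within `G[Z]`, then that distance is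
at most 5. -/
theorem stmt16 {V : Type*} [Fintype V] (G : SimpleGraph V)
    (hconn : G.Connected) (hfree : P7Free G)
    (R B : Set V) (hdisj : Disjoint R B)
    (hvalid : ∃ c : V → Bool, (∀ v ∈ R, c v = true) ∧ (∀ v ∈ B, c v = false) ∧
      ∀ v : V, {u | G.Adj v u ∧ c u ≠ c v}.Subsingleton)
    (hRconn : (G.induce R).Connected) (hBconn : (G.induce B).Connected)
    (Z : Set V) (hZ : Z = (R ∪ B)ᶜ)
    (hdom : ∀ z ∈ Z, ∃ r ∈ R, G.Adj z r)
    (x y : ↥Z) (hreach : (G.induce Z).Reachable x y)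
    (hxnoblue : ¬ ∃ b ∈ B, G.Adj (x : V) b)
    (hyblue : ∃ b ∈ B, G.Adj (y : V) b)
    (hmin : ∀ y' : ↥Z, (G.induce Z).Reachable x y' → (∃ b ∈ B, G.Adj (y' : V) b) →
      (G.induce Z).dist x y ≤ (G.induce Z).dist x y') :
    (G.induce Z).dist x y ≤ 5 := by
  by_contra hd
  push_neg at hd
  set H := G.induce Z with hH
  set d := H.dist x y with hdd
  have hd6 : 6 ≤ d := hd
  obtain ⟨w, hw⟩ := hreach.exists_walk_length_eq_dist
  set g : ℕ → ↥Z := w.getVert with hg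
  -- distance from x to g i is exactly i, for i ≤ d
  have hdistle : ∀ i, i ≤ d → H.dist x (g i) ≤ i := by
    intro i hi
    obtain ⟨p, q, hp, hq⟩ := walk_split w i (by rw [hw]; exact hi)
    calc H.dist x (g i) ≤ p.length := SimpleGraph.dist_le p
    _ = i := hp
  have hdist : ∀ i, i ≤ d → H.dist x (g i) = i := by
    intro i hi
    refine le_antisymm (hdistle i hi) ?_
    obtain ⟨p, q, hp, hq⟩ := walk_split w i (by rw [hw]; exact hi)
    have hr : H.Reachable x (g i) := ⟨p⟩
    obtain ⟨s, hs⟩ := hr.exists_walk_length_eq_dist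
    have h0 : d ≤ (s.append q).length := SimpleGraph.dist_le _
    rw [SimpleGraph.Walk.length_append, hs, hq, hw, ← hdd] at h0
    omega
  have hreachg : ∀ i, H.Reachable x (g i) := by
    intro i
    rcases le_or_gt i d with hi | hi
    · obtain ⟨p, q, hp, hq⟩ := walk_split w i (by rw [hw]; exact hi)
      exact ⟨p⟩
    · have : g i = y := w.getVert_of_length_le (by omega)
      rw [this]; exact hreach
  -- g i has no blue neighbour for i < d
  have hnoblue : ∀ i, i < d → ∀ b ∈ B, ¬ G.Adj ((g i : ↥Z) : V) b := by
    intro i hi b hb hadj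
    have := hmin (g i) (hreachg i) ⟨b, hb, hadj⟩
    rw [hdist i (le_of_lt hi)] at this
    omega
  -- non-adjacency of far-apart vertices on the shortest walk
  have hfar : ∀ i j, i ≤ d → j ≤ d → H.Adj (g i) (g j) → j ≤ i + 1 ∧ i ≤ j + 1 := by
    intro i j hi hj hadj
    constructor
    · obtain ⟨p, hp⟩ := (hreachg i).exists_walk_length_eq_dist
      have : H.dist x (g j) ≤ (p.concat hadj).length := SimpleGraph.dist_le _
      rw [SimpleGraph.Walk.length_concat, hp, hdist i hi, hdist j hj] at this
      exact this
    · obtain ⟨p, hp⟩ := (hreachg j).exists_walk_length_eq_dist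
      have : H.dist x (g i) ≤ (p.concat hadj.symm).length := SimpleGraph.dist_le _
      rw [SimpleGraph.Walk.length_concat, hp, hdist i hi, hdist j hj] at this
      exact this
  have hinj : ∀ i j, i ≤ d → j ≤ d → g i = g j → i = j := by
    intro i j hi hj hij
    have h1 := hdist i hi
    have h2 := hdist j hj
    rw [hij, h2] at h1
    omega
  have hgadj : ∀ i, i < d → H.Adj (g i) (g (i + 1)) := by
    intro i hi
    exact w.adj_getVert_succ (by rw [hw]; exact hi)
  obtain ⟨b, hbB, hby⟩ := hyblue
  have hgd : g d = y := w.getVert_of_length_le hw.le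
  have hbZ : b ∉ Z := by
    rw [hZ]
    simp only [Set.mem_compl_iff, Set.mem_union, not_not, not_or]
    intro hc
    exact hc.2 hbB
  -- build the induced P7
  refine hfree ⟨fun i => if h : (i : ℕ) < 6 then ((g (d - 5 + i) : ↥Z) : V) else b, ?_, ?_⟩
  · intro i j hij
    by_cases hi : (i : ℕ) < 6 <;> by_cases hj : (j : ℕ) < 6
    · simp only [dif_pos hi, dif_pos hj] at hij
      have : d - 5 + (i : ℕ) = d - 5 + (j : ℕ) :=
        hinj _ _ (by omega) (by omega) (Subtype.ext hij)
      have : (i : ℕ) = (j : ℕ) := by omega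
      exact Fin.ext this
    · simp only [dif_pos hi, dif_neg hj] at hij
      exact absurd (hij ▸ (g (d - 5 + i)).2) hbZ
    · simp only [dif_neg hi, dif_pos hj] at hij
      exact absurd (hij ▸ (g (d - 5 + j)).2) hbZ
    · exact Fin.ext (by omega)
  · intro i j
    by_cases hi : (i : ℕ) < 6 <;> by_cases hj : (j : ℕ) < 6
    · simp only [dif_pos hi, dif_pos hj]
      -- both on the path
      constructor
      · intro hadj
        have hadj' : H.Adj (g (d - 5 + i)) (g (d - 5 + j)) := hadj
        have h1 := hfar _ _ (by omega) (by omega) hadj'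
        have hne : (d - 5 + (i : ℕ)) ≠ (d - 5 + (j : ℕ)) := by
          intro hc
          exact (H.irrefl (by rw [show (d - 5 + (i:ℕ)) = (d - 5 + (j:ℕ)) from hc] at hadj'; exact hadj'))
        omega
      · intro hc
        rcases hc with hc | hc
        · have : (d - 5 + (j : ℕ)) = (d - 5 + (i : ℕ)) + 1 := by omega
          rw [this]
          exact hgadj (d - 5 + i) (by omega)
        · have : (d - 5 + (i : ℕ)) = (d - 5 + (j : ℕ)) + 1 := by omega
          rw [this]
          exact (hgadj (d - 5 + j) (by omega)).symm
    · simp only [dif_pos hi, dif_neg hj]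
      have hj6 : (j : ℕ) = 6 := by omega
      constructor
      · intro hadj
        by_contra hc
        push_neg at hc
        have hi5 : (i : ℕ) < 5 := by omega
        exact hnoblue (d - 5 + i) (by omega) b hbB hadj
      · intro hc
        have hi5 : (i : ℕ) = 5 := by omega
        have : d - 5 + (i : ℕ) = d := by omega
        rw [this, hgd]
        exact hby
    · simp only [dif_neg hi, dif_pos hj]
      have hi6 : (i : ℕ) = 6 := by omega
      constructor
      · intro hadj
        by_contra hc
        push_neg at hc
        have hj5 : (j : ℕ) < 5 := by omega
        exact hnoblue (d - 5 + j) (by omega) b hbB hadj.symm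
      · intro hc
        have hj5 : (j : ℕ) = 5 := by omega
        have : d - 5 + (j : ℕ) = d := by omega
        rw [this, hgd]
        exact hby.symm
    · simp only [dif_neg hi, dif_neg hj]
      simp only [SimpleGraph.irrefl, false_iff]
      omega
end
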